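/- arXiv:2005.13056 — 2 statements merged into one kernel-verified Lean document; each statement's English description precedes it below -/
import Mathlib

section
/- Let $M_2$ denote the monoid scheme of $2\times 2$ matrices over $\mathbb{Z}$ and fix a positive integer $q$. The ring of functions on the closed subscheme $\{A \in M_2 : \det A = q\}$ invariant under conjugation by $\mathrm{SL}_2$ is the polynomial ring $\mathbb{Z}[\mathrm{tr}]$ generated by the trace function. -/
open MvPolynomial

/-- The determinant as a polynomial function of the entries of a `2×2`-matrix. -/
noncomputable def detP : MvPolynomial (Fin 2 × Fin 2) ℤ :=
  X (0, 0) * X (1, 1) - X (0, 1) * X (1, 0)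

/-- The trace as a polynomial function of the entries of a `2×2`-matrix. -/
noncomputable def trP : MvPolynomial (Fin 2 × Fin 2) ℤ :=
  X (0, 0) + X (1, 1)

/-- The ideal of the fiber `M₂|_{det = q}` of the monoid of `2×2`-matrices. -/
noncomputable def fiberIdeal (q : ℕ) : Ideal (MvPolynomial (Fin 2 × Fin 2) ℤ) :=
  Ideal.span {detP - C (q : ℤ)}

/-- `f` is, as a function on the scheme `M₂|_{det=q}`, invariant under conjugation by
`SL₂`: for every commutative ring `S`, every `g ∈ SL₂(S)` and every `2×2`-matrix `m`
over `S` with `det m = q`, `f(g m g⁻¹) = f(m)`. -/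
def IsConjInvariant (q : ℕ) (f : MvPolynomial (Fin 2 × Fin 2) ℤ) : Prop :=
  ∀ (S : Type) (_ : CommRing S) (g : Matrix.SpecialLinearGroup (Fin 2) S)
    (m : Matrix (Fin 2) (Fin 2) S), m.det = (q : S) →
      MvPolynomial.aeval
        (fun pq : Fin 2 × Fin 2 =>
          ((g : Matrix (Fin 2) (Fin 2) S) * m * ((g⁻¹ : Matrix.SpecialLinearGroup (Fin 2) S) :
            Matrix (Fin 2) (Fin 2) S)) pq.1 pq.2) f
      = MvPolynomial.aeval (fun pq : Fin 2 × Fin 2 => m pq.1 pq.2) f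

/-!
Conjugation preserves trace and determinant, so `f ≡ p(tr)` modulo `det - q` makes `f`
invariant. Conversely, over an algebraically closed field a matrix with lower-left entry
`c ≠ 0` is `SL₂`-conjugate, by a transvection followed by `diag(√c, 1/√c)`, to the companion
matrix `[[0, -q], [1, tr]]`. Hence an invariant `f` agrees with `p(tr)`, where
`p(t) = f([[0, -q], [1, t]])`, at the generic point `[[a, (ad - q)/c], [c, d]]` of the
fiber over `Frac ℤ[a, c, d]`. Viewing `ℤ[a, b, c, d]` as `ℤ[a, c, d][b]`, the polynomial
`det - q` becomes `(ad - q) - c b`, which is primitive, so by Gauss's lemma everything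
vanishing at that point lies in `(det - q)`. Injectivity of `p ↦ p(tr)` follows by
evaluating at the companion matrix over `ℤ[t]`.
-/

namespace Matrix.SpecialLinearGroup

variable {n R : Type*} [Fintype n] [DecidableEq n] [CommRing R]

theorem coe_mul_coe_inv (g : SpecialLinearGroup n R) :
    (g : Matrix n n R) * ((g⁻¹ : SpecialLinearGroup n R) : Matrix n n R) = 1 := by
  rw [← coe_mul, mul_inv_cancel, coe_one]

theorem coe_inv_mul_coe (g : SpecialLinearGroup n R) :
    ((g⁻¹ : SpecialLinearGroup n R) : Matrix n n R) * g = 1 := by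
  rw [← coe_mul, inv_mul_cancel, coe_one]

theorem det_conj (g : SpecialLinearGroup n R) (m : Matrix n n R) :
    ((g : Matrix n n R) * m * ((g⁻¹ : SpecialLinearGroup n R) : Matrix n n R)).det = m.det :=
  det_conj_of_mul_eq_one g.coe_mul_coe_inv g.coe_inv_mul_coe

theorem trace_conj (g : SpecialLinearGroup n R) (m : Matrix n n R) :
    ((g : Matrix n n R) * m * ((g⁻¹ : SpecialLinearGroup n R) : Matrix n n R)).trace =
      m.trace := by
  rw [trace_mul_cycle, g.coe_inv_mul_coe, Matrix.one_mul]

end Matrix.SpecialLinearGroup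

section MatrixEval

variable {S T : Type*} [CommRing S] [CommRing T]

noncomputable def matrixEval (m : Matrix (Fin 2) (Fin 2) S) :
    MvPolynomial (Fin 2 × Fin 2) ℤ →ₐ[ℤ] S :=
  aeval fun pq => m pq.1 pq.2

theorem matrixEval_trP (m : Matrix (Fin 2) (Fin 2) S) : matrixEval m trP = m.trace := by
  simp [matrixEval, trP, Matrix.trace_fin_two]

theorem matrixEval_detP (m : Matrix (Fin 2) (Fin 2) S) : matrixEval m detP = m.det := by
  simp [matrixEval, detP, Matrix.det_fin_two]

theorem matrixEval_aeval_trP (m : Matrix (Fin 2) (Fin 2) S) (p : Polynomial ℤ) :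
    matrixEval m (Polynomial.aeval trP p) = Polynomial.aeval m.trace p := by
  rw [← Polynomial.aeval_algHom_apply, matrixEval_trP]

theorem map_matrixEval (φ : S →+* T) (m : Matrix (Fin 2) (Fin 2) S)
    (f : MvPolynomial (Fin 2 × Fin 2) ℤ) : φ (matrixEval m f) = matrixEval (m.map φ) f :=
  comp_aeval_apply (φ := φ.toIntAlgHom) (p := f) ..

theorem matrixEval_eq_zero_of_mem_fiberIdeal {q : ℕ} {m : Matrix (Fin 2) (Fin 2) S}
    (hm : m.det = q) {f : MvPolynomial (Fin 2 × Fin 2) ℤ} (hf : f ∈ fiberIdeal q) :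
    matrixEval m f = 0 := by
  obtain ⟨h, rfl⟩ := Ideal.mem_span_singleton'.mp hf
  simp [matrixEval_detP, hm]

end MatrixEval

theorem isConjInvariant_of_sub_aeval_trP_mem {q : ℕ} {f : MvPolynomial (Fin 2 × Fin 2) ℤ}
    {p : Polynomial ℤ} (hfp : f - Polynomial.aeval trP p ∈ fiberIdeal q) :
    IsConjInvariant q f := by
  intro S _ g m hm
  have eval_eq {m' : Matrix (Fin 2) (Fin 2) S} (hm' : m'.det = q) :
      matrixEval m' f = Polynomial.aeval m'.trace p := by
    rw [← matrixEval_aeval_trP, ← sub_eq_zero, ← map_sub,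
      matrixEval_eq_zero_of_mem_fiberIdeal hm' hfp]
  change matrixEval _ f = matrixEval m f
  rw [eval_eq hm, eval_eq (by rw [g.det_conj, hm]), g.trace_conj]

section Companion

variable {S : Type*} [CommRing S]

def companion (δ τ : S) : Matrix (Fin 2) (Fin 2) S := !![0, -δ; 1, τ]

theorem det_companion (δ τ : S) : (companion δ τ).det = δ := by
  simp [companion, Matrix.det_fin_two]

theorem trace_companion (δ τ : S) : (companion δ τ).trace = τ := by
  simp [companion, Matrix.trace_fin_two]

theorem exists_conj_eq_companion {K : Type*} [Field K] [IsAlgClosed K]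
    (m : Matrix (Fin 2) (Fin 2) K) (hm : m 1 0 ≠ 0) :
    ∃ g : Matrix.SpecialLinearGroup (Fin 2) K,
      (g : Matrix (Fin 2) (Fin 2) K) * m * ((g⁻¹ : Matrix.SpecialLinearGroup (Fin 2) K) :
        Matrix (Fin 2) (Fin 2) K) = companion m.det m.trace := by
  obtain ⟨a, b, c, d, rfl⟩ : ∃ a b c d : K, m = !![a, b; c, d] :=
    ⟨_, _, _, _, m.eta_fin_two⟩
  obtain ⟨v, rfl⟩ := IsAlgClosed.exists_eq_mul_self c
  have hv : v ≠ 0 := by rintro rfl; simp at hm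
  have hdet : (!![v, -a / v; 0, v⁻¹] : Matrix (Fin 2) (Fin 2) K).det = 1 := by
    simp [Matrix.det_fin_two, hv]
  let g : Matrix.SpecialLinearGroup (Fin 2) K := ⟨_, hdet⟩
  refine ⟨g, ?_⟩
  change !![v, -a / v; 0, v⁻¹] * _ * (g⁻¹ : Matrix.SpecialLinearGroup (Fin 2) K) = _
  rw [Matrix.SpecialLinearGroup.coe_inv, show (g : Matrix (Fin 2) (Fin 2) K) = _ from rfl,
    Matrix.adjugate_fin_two_of]
  ext i j
  fin_cases i <;> fin_cases j <;>
    simp [companion, Matrix.det_fin_two, Matrix.trace_fin_two, hv] <;> field_simp <;> ring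

noncomputable def companionRestrict (q : ℕ) (f : MvPolynomial (Fin 2 × Fin 2) ℤ) :
    Polynomial ℤ :=
  matrixEval (companion (q : Polynomial ℤ) Polynomial.X) f

theorem matrixEval_companion (q : ℕ) (τ : S) (f : MvPolynomial (Fin 2 × Fin 2) ℤ) :
    matrixEval (companion (q : S) τ) f = Polynomial.aeval τ (companionRestrict q f) := by
  change _ = (Polynomial.aeval τ).toRingHom _
  rw [companionRestrict, map_matrixEval]
  congr 2
  ext i j
  fin_cases i <;> fin_cases j <;> simp [companion]

end Companion

theorem IsConjInvariant.matrixEval_eq_aeval_trace {q : ℕ} {f : MvPolynomial (Fin 2 × Fin 2) ℤ}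
    (hf : IsConjInvariant q f) {K : Type} [Field K] (m : Matrix (Fin 2) (Fin 2) K)
    (hm : m.det = q) (hm₁₀ : m 1 0 ≠ 0) :
    matrixEval m f = Polynomial.aeval m.trace (companionRestrict q f) := by
  let φ := algebraMap K (AlgebraicClosure K)
  apply φ.injective
  have hdet : (m.map φ).det = q := by
    rw [← RingHom.mapMatrix_apply, ← RingHom.map_det, hm, map_natCast]
  obtain ⟨g, hg⟩ := exists_conj_eq_companion (m.map φ) (by simpa using hm₁₀)
  have hconj : matrixEval _ f = matrixEval (m.map φ) f := hf _ _ g (m.map φ) hdet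
  rw [map_matrixEval, ← hconj, hg, hdet, matrixEval_companion,
    ← Polynomial.aeval_algebraMap_apply, AddMonoidHom.map_trace]
  rfl

section EliminateVariable

variable {σ : Type*} [DecidableEq σ]

noncomputable def eliminate (i₀ : σ) :
    MvPolynomial σ ℤ ≃ₐ[ℤ] Polynomial (MvPolynomial {i // i ≠ i₀} ℤ) :=
  (renameEquiv ℤ (Equiv.optionSubtypeNe i₀).symm).trans (optionEquivLeft ℤ _)

theorem eliminate_X_self (i₀ : σ) : eliminate i₀ (X i₀) = Polynomial.X := by
  simp [eliminate]

theorem eliminate_X_of_ne {i₀ i : σ} (h : i ≠ i₀) :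
    eliminate i₀ (X i) = Polynomial.C (X ⟨i, h⟩) := by
  simp [eliminate, Equiv.optionSubtypeNe_symm_of_ne h]

theorem aeval_dite_eq_aeval_eliminate (i₀ : σ) {A : Type*} [CommRing A]
    [Algebra (MvPolynomial {i // i ≠ i₀} ℤ) A] (β : A) (f : MvPolynomial σ ℤ) :
    aeval (fun i => if h : i = i₀ then β
      else algebraMap (MvPolynomial {i // i ≠ i₀} ℤ) A (X ⟨i, h⟩)) f
      = Polynomial.aeval β (eliminate i₀ f) := by
  refine RingHom.congr_fun (MvPolynomial.ringHom_ext (f := (aeval _).toRingHom)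
    (g := (Polynomial.aeval β).toRingHom.comp (eliminate i₀).toRingHom) ?_ ?_) f
  · intro r
    simp
  · intro i
    by_cases h : i = i₀
    · subst h
      simp [eliminate_X_self]
    · simp [h, eliminate_X_of_ne h]

end EliminateVariable

section GaussLemma

open Polynomial

theorem Polynomial.isPrimitive_C_sub_C_mul_X {R : Type*} [CommRing R] [IsDomain R] {u w : R}
    (hu : Prime u) (huw : ¬u ∣ w) : (C w - C u * X).IsPrimitive := by
  intro r hr
  rw [C_dvd_iff_dvd_coeff] at hr
  have hrw : r ∣ w := by simpa using hr 0
  obtain ⟨s, rfl⟩ : r ∣ u := by simpa using hr 1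
  refine (hu.irreducible.isUnit_or_isUnit rfl).resolve_right fun hs => huw ?_
  rwa [hs.mul_right_dvd]

theorem Polynomial.dvd_of_aeval_div_eq_zero {R K : Type*} [CommRing R] [IsDomain R]
    [IsGCDMonoid R] [Field K] [Algebra R K] [IsFractionRing R K] {u w : R} (hu : u ≠ 0)
    (hprim : (C w - C u * X).IsPrimitive) {F : R[X]}
    (hF : aeval (algebraMap R K w / algebraMap R K u) F = 0) : C w - C u * X ∣ F := by
  have hu' : algebraMap R K u ≠ 0 := IsFractionRing.to_map_eq_zero_iff.not.mpr hu
  have hmap : (C w - C u * X).map (algebraMap R K)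
      = C (-algebraMap R K u) * (X - C (algebraMap R K w / algebraMap R K u)) := by
    rw [mul_sub, ← C_mul, neg_mul, mul_div_cancel₀ _ hu']
    simp only [Polynomial.map_sub, Polynomial.map_mul, map_C, map_X, C_neg]
    ring
  rw [hprim.dvd_iff_fraction_map_dvd_fraction_map K, hmap,
    (isUnit_C.mpr (neg_ne_zero.mpr hu').isUnit).mul_left_dvd, dvd_iff_isRoot, IsRoot,
    eval_map_algebraMap, hF]

end GaussLemma

section GenericMatrix

abbrev EntriesOffB := {p : Fin 2 × Fin 2 // p ≠ (0, 1)}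

local notation "𝔞" => (X ⟨(0, 0), by decide⟩ : MvPolynomial EntriesOffB ℤ)
local notation "𝔠" => (X ⟨(1, 0), by decide⟩ : MvPolynomial EntriesOffB ℤ)
local notation "𝔡" => (X ⟨(1, 1), by decide⟩ : MvPolynomial EntriesOffB ℤ)
local notation "𝕂" => FractionRing (MvPolynomial EntriesOffB ℤ)

theorem eliminate_detP_sub_C (q : ℕ) :
    eliminate (0, 1) (detP - C (q : ℤ))
      = Polynomial.C (𝔞 * 𝔡 - C (q : ℤ)) - Polynomial.C 𝔠 * Polynomial.X := by
  simp [detP, eliminate_X_self, eliminate_X_of_ne, ← MvPolynomial.algebraMap_eq]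
  ring

theorem not_dvd_mul_sub_C (q : ℕ) : ¬𝔠 ∣ 𝔞 * 𝔡 - C (q : ℤ) := by
  intro h
  have := map_dvd (eval fun p : EntriesOffB =>
    if p.1 = (1, 0) then 0 else if p.1 = (0, 0) then 1 else (q + 1 : ℤ)) h
  simp at this

/-- The generic point of `{det = q}` away from `c = 0`: `b = (a d - q) / c`. -/
noncomputable def genericMatrix (q : ℕ) : Matrix (Fin 2) (Fin 2) 𝕂 :=
  Matrix.of fun i j => if h : (i, j) = (0, 1)
    then algebraMap (MvPolynomial EntriesOffB ℤ) 𝕂 (𝔞 * 𝔡 - C (q : ℤ)) /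
      algebraMap (MvPolynomial EntriesOffB ℤ) 𝕂 𝔠
    else algebraMap (MvPolynomial EntriesOffB ℤ) 𝕂 (X (⟨(i, j), h⟩ : EntriesOffB))

theorem genericMatrix_one_zero_ne_zero (q : ℕ) : genericMatrix q 1 0 ≠ 0 := by
  simp [genericMatrix, X_ne_zero]

theorem det_genericMatrix (q : ℕ) : (genericMatrix q).det = q := by
  simp [genericMatrix, Matrix.det_fin_two, X_ne_zero]

theorem mem_fiberIdeal_of_matrixEval_genericMatrix_eq_zero {q : ℕ}
    {f : MvPolynomial (Fin 2 × Fin 2) ℤ} (hf : matrixEval (genericMatrix q) f = 0) :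
    f ∈ fiberIdeal q := by
  rw [fiberIdeal, Ideal.mem_span_singleton, ← map_dvd_iff (eliminate (0, 1)),
    eliminate_detP_sub_C]
  refine Polynomial.dvd_of_aeval_div_eq_zero (K := 𝕂) (X_ne_zero _)
    (Polynomial.isPrimitive_C_sub_C_mul_X X_prime (not_dvd_mul_sub_C q)) ?_
  rw [← aeval_dite_eq_aeval_eliminate]
  exact hf

end GenericMatrix

theorem IsConjInvariant.sub_aeval_companionRestrict_mem {q : ℕ}
    {f : MvPolynomial (Fin 2 × Fin 2) ℤ} (hf : IsConjInvariant q f) :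
    f - Polynomial.aeval trP (companionRestrict q f) ∈ fiberIdeal q := by
  apply mem_fiberIdeal_of_matrixEval_genericMatrix_eq_zero
  rw [map_sub, matrixEval_aeval_trP, hf.matrixEval_eq_aeval_trace _ (det_genericMatrix q)
    (genericMatrix_one_zero_ne_zero q), sub_self]

theorem eq_zero_of_aeval_trP_mem_fiberIdeal {q : ℕ} {p : Polynomial ℤ}
    (hp : Polynomial.aeval trP p ∈ fiberIdeal q) : p = 0 := by
  have hvanish := matrixEval_eq_zero_of_mem_fiberIdeal
    (det_companion (q : Polynomial ℤ) Polynomial.X) hp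
  rwa [matrixEval_aeval_trP, trace_companion, Polynomial.aeval_def, algebraMap_int_eq,
    RingHom.ext_int (Int.castRingHom _) Polynomial.C, Polynomial.eval₂_C_X] at hvanish

theorem stmt_6_general (q : ℕ) :
    (∀ f : MvPolynomial (Fin 2 × Fin 2) ℤ,
      IsConjInvariant q f ↔
        ∃ p : Polynomial ℤ, f - Polynomial.aeval trP p ∈ fiberIdeal q) ∧
    (∀ p : Polynomial ℤ, Polynomial.aeval trP p ∈ fiberIdeal q → p = 0) :=
  ⟨fun _ => ⟨fun hf => ⟨_, hf.sub_aeval_companionRestrict_mem⟩,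
    fun ⟨_, hp⟩ => isConjInvariant_of_sub_aeval_trP_mem hp⟩,
   fun _ => eq_zero_of_aeval_trP_mem_fiberIdeal⟩

theorem stmt_6 (q : ℕ) (hq : 0 < q) :
    (∀ f : MvPolynomial (Fin 2 × Fin 2) ℤ,
      IsConjInvariant q f ↔
        ∃ p : Polynomial ℤ, f - Polynomial.aeval trP p ∈ fiberIdeal q) ∧
    (∀ p : Polynomial ℤ, Polynomial.aeval trP p ∈ fiberIdeal q → p = 0) :=
  stmt_6_general q
end

section
/- With the identification of the integral spherical Hecke algebra $H_G \cong \mathbb{Z}[V_{\hat{G},\rho_{ad}}\rtimes\langle\sigma\rangle|_{\tilde{d}_{\rho_{ad}}=(q,\sigma)}]^{\hat{G}}$ of an unramified group $G$ over a local field with residue characteristic $p$: reduction mod $p$ yields a canonical isomorphism $H_G \otimes \mathbb{F}_p \cong \mathbb{F}_p[\mathrm{As}_{\hat{G}}]^{c_\sigma(\hat{G})}$, where $\mathrm{As}_{\hat{G}} = \mathrm{Spec}\,\mathrm{gr}\,\mathbb{Z}[\hat{G}]$ is the asymptotic cone; moreover $\mathbb{F}_p[\mathrm{As}_{\hat{G}}]^{c_\sigma(\hat{G})}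 = \bigoplus_{\nu \in X^\bullet(\hat{T})^+}(S_{\nu^*} \otimes S_\nu)^{c_\sigma(\hat{G})} \cong \mathbb{F}_p[X_*(T)^{\sigma,-}]$ as $\mathbb{F}_p$-modules, with basis indexed by $\sigma$-invariant antidominant cocharacters. -/
open Finset

/-!
Modulo `p` every coefficient `q ^ ⟨ρ_ad, μ' - μ⟩` of the orbit sum `m_μ` vanishes except the
one at `μ' = μ` itself, because `p ∣ q` and the exponent is strictly positive away from `μ`.
Hence the reductions of the generators `m_μ` are exactly the basis vectors `e^μ` of `𝔽_p[Λ]`,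
`μ` antidominant, and since every scalar of `𝔽_p` is an integer, the `ℤ`-span of the reductions
is their `𝔽_p`-span.
-/

namespace AddMonoidAlgebra

theorem mapRingHom_sum_single_eq_single {R S M : Type*} [Semiring R] [Semiring S] [AddMonoid M]
    (f : R →+* S) {s : Finset M} {μ : M} (hμ : μ ∈ s) (c : M → R) (hcμ : f (c μ) = 1)
    (hc : ∀ ν ∈ s, ν ≠ μ → f (c ν) = 0) :
    mapRingHom M f (∑ ν ∈ s, single ν (c ν)) = single μ 1 := by
  rw [map_sum, Finset.sum_eq_single_of_mem μ hμ fun ν hν hne => ?_]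
  · rw [mapRingHom_single, hcμ]
  · rw [mapRingHom_single, hc ν hν hne, single_zero]

end AddMonoidAlgebra

/-- The generator `m_μ` of the Hecke algebra; `lam` stands for `⟨ρ_ad, ·⟩`. -/
noncomputable def twistedOrbitSum {Λ W : Type*} [AddCommGroup Λ] [DecidableEq Λ] [Monoid W]
    [Fintype W]
    (act : W →* Multiplicative (AddAut Λ)) (lam : Λ →+ ℤ) (q : ℕ) (μ : Λ) :
    AddMonoidAlgebra ℤ Λ :=
  ∑ ν ∈ Finset.image (fun w => Multiplicative.toAdd (act w) μ) Finset.univ,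
    AddMonoidAlgebra.single ν ((q : ℤ) ^ (lam (ν - μ)).toNat)

theorem mapRingHom_twistedOrbitSum {Λ W : Type*} [AddCommGroup Λ] [DecidableEq Λ] [Monoid W]
    [Fintype W] (act : W →* Multiplicative (AddAut Λ)) (lam : Λ →+ ℤ) {p q : ℕ} (hpq : p ∣ q)
    {μ : Λ} (hstrict : ∀ w : W, Multiplicative.toAdd (act w) μ ≠ μ →
      0 < lam (Multiplicative.toAdd (act w) μ - μ)) :
    AddMonoidAlgebra.mapRingHom Λ (Int.castRingHom (ZMod p)) (twistedOrbitSum act lam q μ) =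
      AddMonoidAlgebra.single μ 1 := by
  have hμ : μ ∈ Finset.image (fun w => Multiplicative.toAdd (act w) μ) Finset.univ :=
    Finset.mem_image.2 ⟨1, Finset.mem_univ _, by simp⟩
  refine AddMonoidAlgebra.mapRingHom_sum_single_eq_single _ hμ _ (by simp) fun ν hν hne => ?_
  obtain ⟨w, -, rfl⟩ := Finset.mem_image.1 hν
  have hexp : (lam (Multiplicative.toAdd (act w) μ - μ)).toNat ≠ 0 := by
    have := hstrict w hne
    omega
  rw [map_pow, map_natCast, (ZMod.natCast_eq_zero_iff q p).2 hpq, zero_pow hexp]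

theorem Submodule.mem_map_span_int_iff {K M N ι : Type*} [CommRing K] [AddCommGroup M]
    [AddCommGroup N] [Module K N] (hK : Function.Surjective (Int.cast : ℤ → K))
    (f : M →ₗ[ℤ] N) (g : ι → M) (x : N) :
    x ∈ (span ℤ (Set.range g)).map f ↔ x ∈ span K (Set.range (f ∘ g)) := by
  rw [map_span, ← Set.range_comp, ← restrictScalars_span ℤ K hK, restrictScalars_mem]

theorem stmt_18_general (p : ℕ)
    {Λ : Type*} [AddCommGroup Λ] [DecidableEq Λ]
    {W : Type*} [Group W] [Fintype W]
    (act : W →* Multiplicative (AddAut Λ)) (lam : Λ →+ ℤ) (q : ℕ) (hpq : p ∣ q)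
    (Anti : Set Λ)
    (hstrict : ∀ μ ∈ Anti, ∀ w : W, Multiplicative.toAdd (act w) μ ≠ μ →
      0 < lam (Multiplicative.toAdd (act w) μ - μ)) :
    (∀ x : AddMonoidAlgebra (ZMod p) Λ,
      x ∈ Submodule.map
        ((AddMonoidAlgebra.mapRingHom Λ
          (Int.castRingHom (ZMod p))).toAddMonoidHom.toIntLinearMap)
        (Submodule.span ℤ (Set.range (fun μ : Anti =>
          (∑ ν ∈ Finset.image (fun w => Multiplicative.toAdd (act w) (μ : Λ)) Finset.univ,
            AddMonoidAlgebra.single ν ((q : ℤ) ^ ((lam (ν - (μ : Λ))).toNat)) :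
              AddMonoidAlgebra ℤ Λ))))
      ↔ x ∈ Submodule.span (ZMod p)
          {x : AddMonoidAlgebra (ZMod p) Λ |
            ∃ μ ∈ Anti, x = AddMonoidAlgebra.single μ (1 : ZMod p)}) ∧
    LinearIndependent (ZMod p)
      (fun μ : Anti =>
        (AddMonoidAlgebra.single (μ : Λ) (1 : ZMod p) :
          AddMonoidAlgebra (ZMod p) Λ)) := by
  refine ⟨fun x => ?_, (AddMonoidAlgebra.basis Λ (ZMod p)).linearIndependent.comp _
    Subtype.val_injective⟩
  have hreduce : (AddMonoidAlgebra.mapRingHom Λ (Int.castRingHom (ZMod p))) ∘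
      (fun μ : Anti => twistedOrbitSum act lam q μ) =
        fun μ : Anti => AddMonoidAlgebra.single (μ : Λ) 1 :=
    funext fun μ => mapRingHom_twistedOrbitSum act lam hpq (hstrict μ μ.2)
  have hbasis : {x : AddMonoidAlgebra (ZMod p) Λ | ∃ μ ∈ Anti, x = AddMonoidAlgebra.single μ 1} =
      Set.range fun μ : Anti => AddMonoidAlgebra.single (μ : Λ) 1 := by
    ext x
    simp [eq_comm]
  rw [hbasis, ← hreduce]
  exact Submodule.mem_map_span_int_iff ZMod.intCast_surjective _ _ x

theorem stmt_18 (p : ℕ) [Fact p.Prime]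
    {Λ : Type*} [AddCommGroup Λ] [DecidableEq Λ]
    {W : Type*} [Group W] [Fintype W]
    (act : W →* Multiplicative (AddAut Λ)) (lam : Λ →+ ℤ) (q : ℕ) (hq : 0 < q) (hpq : p ∣ q)
    (Anti : Set Λ)
    (hfund : ∀ μ : Λ, ∃! ν : Λ, ν ∈ Anti ∧ ∃ w : W, ν = Multiplicative.toAdd (act w) μ)
    (hpos : ∀ μ ∈ Anti, ∀ w : W, 0 ≤ lam (Multiplicative.toAdd (act w) μ - μ))
    (hstrict : ∀ μ ∈ Anti, ∀ w : W, Multiplicative.toAdd (act w) μ ≠ μ →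
      0 < lam (Multiplicative.toAdd (act w) μ - μ)) :
    (∀ x : AddMonoidAlgebra (ZMod p) Λ,
      x ∈ Submodule.map
        ((AddMonoidAlgebra.mapRingHom Λ
          (Int.castRingHom (ZMod p))).toAddMonoidHom.toIntLinearMap)
        (Submodule.span ℤ (Set.range (fun μ : Anti =>
          (∑ ν ∈ Finset.image (fun w => Multiplicative.toAdd (act w) (μ : Λ)) Finset.univ,
            AddMonoidAlgebra.single ν ((q : ℤ) ^ ((lam (ν - (μ : Λ))).toNat)) :
              AddMonoidAlgebra ℤ Λ))))
      ↔ x ∈ Submodule.span (ZMod p)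
          {x : AddMonoidAlgebra (ZMod p) Λ |
            ∃ μ ∈ Anti, x = AddMonoidAlgebra.single μ (1 : ZMod p)}) ∧
    LinearIndependent (ZMod p)
      (fun μ : Anti =>
        (AddMonoidAlgebra.single (μ : Λ) (1 : ZMod p) :
          AddMonoidAlgebra (ZMod p) Λ)) :=
  stmt_18_general p act lam q hpq Anti hstrict
end
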